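/- Let Γ, Π, Ξ, Υ ∈ ℝ^{n×n} and Θ ∈ ℝ^{m×m} be diagonal matrices with positive diagonal entries, K ∈ ℝ^{m×n} with trivial kernel (Ker(K) = {0}), P ∈ ℝ^{n×n} skew-symmetric, and Z ∈ ℝ^{m×m} with Z + Zᵀ negative definite. Then the (3n+m)×(3n+m) block matrix B = [[0, −Γ, 0, 0], [Ξ, −Υ, −Ξ, 0], [0, Π, ΠP, −ΠKᵀ], [0, 0, ΘK, ΘZ]] is Hurwitz. -/

import Mathlib

open Matrix

/-- A real square matrix is Hurwitz if every eigenvalue (over `ℂ`) has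
strictly negative real part. -/
def IsHurwitz {n : Type*} [Fintype n] [DecidableEq n] (A : Matrix n n ℝ) : Prop :=
  ∀ μ ∈ spectrum ℂ (A.map (Complex.ofReal)), μ.re < 0

/-!
With `W = diag(Γ⁻¹, Ξ⁻¹, Π⁻¹, Θ⁻¹)` the matrix `W B` is a skew-symmetric matrix plus
`diag(0, -Ξ⁻¹Υ, 0, Z)`, so along `ẋ = B x` the Lyapunov function `V(x) = ½ xᵀ W x` has
`V̇ = -x₂ᵀ Ξ⁻¹ Υ x₂ + x₄ᵀ Z x₄ ≤ 0`. For an eigenpair `B v = μ v` over `ℂ` this gives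
`Re μ · v* W v = Re (v* W B v) ≤ 0`, and if `Re μ ≥ 0` then `V̇` vanishes on the real and
imaginary parts of `v`, forcing `v₂ = v₄ = 0`. This is where LaSalle's argument enters: the second
and fourth block rows of `B v = μ v` then read `Ξ (v₁ - v₃) = 0` and `Θ K v₃ = 0`, so `v = 0`
because `K` is injective.
-/

open Complex
open scoped ComplexOrder

section Complexification

variable {m n : Type*}

theorem re_comp_eq_zero_and_im_comp_eq_zero_iff {v : n → ℂ} :
    re ∘ v = 0 ∧ im ∘ v = 0 ↔ v = 0 :=
  ⟨fun ⟨hre, him⟩ => funext fun i => Complex.ext (congrFun hre i) (congrFun him i),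
    by rintro rfl; constructor <;> rfl⟩

variable [Fintype n]

theorem re_comp_mulVec_map_ofReal (M : Matrix m n ℝ) (v : n → ℂ) :
    re ∘ (M.map ofReal *ᵥ v) = M *ᵥ (re ∘ v) := by
  ext i; simp [mulVec, dotProduct, re_sum]

theorem im_comp_mulVec_map_ofReal (M : Matrix m n ℝ) (v : n → ℂ) :
    im ∘ (M.map ofReal *ᵥ v) = M *ᵥ (im ∘ v) := by
  ext i; simp [mulVec, dotProduct, im_sum]

theorem eq_zero_of_mulVec_map_ofReal_eq_zero {M : Matrix m n ℝ}
    (hM : ∀ x, M *ᵥ x = 0 → x = 0) {v : n → ℂ} (hv : M.map ofReal *ᵥ v = 0) : v = 0 := by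
  refine re_comp_eq_zero_and_im_comp_eq_zero_iff.mp ⟨hM _ ?_, hM _ ?_⟩
  · rw [← re_comp_mulVec_map_ofReal, hv]; rfl
  · rw [← im_comp_mulVec_map_ofReal, hv]; rfl

theorem re_star_dotProduct (v w : n → ℂ) :
    (star v ⬝ᵥ w).re = re ∘ v ⬝ᵥ re ∘ w + im ∘ v ⬝ᵥ im ∘ w := by
  simp [dotProduct, re_sum, ← Finset.sum_add_distrib]

theorem re_star_dotProduct_map_ofReal_mulVec (M : Matrix n n ℝ) (v : n → ℂ) :
    (star v ⬝ᵥ M.map ofReal *ᵥ v).re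
      = re ∘ v ⬝ᵥ M *ᵥ (re ∘ v) + im ∘ v ⬝ᵥ M *ᵥ (im ∘ v) := by
  rw [re_star_dotProduct, re_comp_mulVec_map_ofReal, im_comp_mulVec_map_ofReal]

theorem Matrix.PosDef.map_ofReal [DecidableEq n] {W : Matrix n n ℝ} (hW : W.PosDef) :
    (W.map ofReal).PosDef := by
  have hH : (W.map ofReal).IsHermitian := hW.isHermitian.map _ fun _ => (conj_ofReal _).symm
  refine .of_dotProduct_mulVec_pos hH fun v hv =>
    pos_iff.mpr ⟨?_, (hH.im_star_dotProduct_mulVec_self v).symm⟩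
  rw [re_star_dotProduct_map_ofReal_mulVec]
  by_cases hre : re ∘ v = 0
  · have him : im ∘ v ≠ 0 := fun him => hv (re_comp_eq_zero_and_im_comp_eq_zero_iff.mp ⟨hre, him⟩)
    simpa [hre] using hW.dotProduct_mulVec_pos him
  · exact add_pos_of_pos_of_nonneg (hW.dotProduct_mulVec_pos hre)
      (hW.posSemidef.dotProduct_mulVec_nonneg _)

end Complexification

section QuadraticForm

variable {n : Type*} [Fintype n]

theorem dotProduct_transpose_mulVec_self (M : Matrix n n ℝ) (x : n → ℝ) :
    x ⬝ᵥ Mᵀ *ᵥ x = x ⬝ᵥ M *ᵥ x := by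
  rw [mulVec_transpose, dotProduct_comm, dotProduct_mulVec]

theorem dotProduct_mulVec_self_eq_zero_of_transpose_eq_neg {J : Matrix n n ℝ} (hJ : Jᵀ = -J)
    (x : n → ℝ) : x ⬝ᵥ J *ᵥ x = 0 := by
  have h := dotProduct_transpose_mulVec_self J x
  rw [hJ, neg_mulVec, dotProduct_neg] at h
  linarith

theorem dotProduct_mulVec_self_neg {Z : Matrix n n ℝ} (hZ : (-(Z + Zᵀ)).PosDef) {x : n → ℝ}
    (hx : x ≠ 0) : x ⬝ᵥ Z *ᵥ x < 0 := by
  have h := hZ.dotProduct_mulVec_pos hx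
  rw [neg_mulVec, add_mulVec, star_trivial, dotProduct_neg, dotProduct_add,
    dotProduct_transpose_mulVec_self] at h
  linarith

theorem dotProduct_mulVec_self_nonpos {Z : Matrix n n ℝ} (hZ : (-(Z + Zᵀ)).PosDef) (x : n → ℝ) :
    x ⬝ᵥ Z *ᵥ x ≤ 0 := by
  rcases eq_or_ne x 0 with rfl | hx
  · simp
  · exact (dotProduct_mulVec_self_neg hZ hx).le

end QuadraticForm

theorem exists_mulVec_eq_smul_of_mem_spectrum {n : Type*} [Fintype n] [DecidableEq n]
    {A : Matrix n n ℂ} {μ : ℂ} (hμ : μ ∈ spectrum ℂ A) : ∃ v ≠ 0, A *ᵥ v = μ • v := by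
  rw [← spectrum_toLin', ← Module.End.hasEigenvalue_iff_mem_spectrum] at hμ
  obtain ⟨v, hv⟩ := hμ.exists_hasEigenvector
  exact ⟨v, hv.2, by simpa using hv.apply_eq_smul⟩

theorem isHurwitz_of_lyapunov {n : Type*} [Fintype n] [DecidableEq n] {A W : Matrix n n ℝ}
    (hW : W.PosDef) (hdiss : ∀ x, x ⬝ᵥ (W * A) *ᵥ x ≤ 0)
    (hlasalle : ∀ (μ : ℂ) (v : n → ℂ), A.map ofReal *ᵥ v = μ • v →
      re ∘ v ⬝ᵥ (W * A) *ᵥ (re ∘ v) = 0 → im ∘ v ⬝ᵥ (W * A) *ᵥ (im ∘ v) = 0 → v = 0) :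
    IsHurwitz A := by
  intro μ hμ
  obtain ⟨v, hv0, hv⟩ := exists_mulVec_eq_smul_of_mem_spectrum hμ
  obtain ⟨hWv, hWv_im⟩ := pos_iff.mp (hW.map_ofReal.dotProduct_mulVec_pos hv0)
  have hrate : (star v ⬝ᵥ (W * A).map ofReal *ᵥ v).re
      = μ.re * (star v ⬝ᵥ W.map ofReal *ᵥ v).re := by
    have hmul : (W * A).map ofReal = W.map ofReal * A.map ofReal := Matrix.map_mul (f := ofRealHom)
    rw [hmul, ← mulVec_mulVec, hv, mulVec_smul, dotProduct_smul, smul_eq_mul, mul_re, ← hWv_im,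
      mul_zero, sub_zero]
  rw [re_star_dotProduct_map_ofReal_mulVec] at hrate
  by_contra! hμ0
  have hre := hdiss (re ∘ v)
  have him := hdiss (im ∘ v)
  have := mul_nonneg hμ0 hWv.le
  exact hv0 (hlasalle μ v hv (by linarith) (by linarith))

section BlockSystem

variable {R ι κ : Type*} [Fintype ι] [Fintype κ] [DecidableEq ι] [DecidableEq κ]

def blockSystem [CommRing R] (γ π ξ υ : ι → R) (θ : κ → R) (P : Matrix ι ι R)
    (K : Matrix κ ι R) (Z : Matrix κ κ R) : Matrix ((ι ⊕ ι) ⊕ (ι ⊕ κ)) ((ι ⊕ ι) ⊕ (ι ⊕ κ)) R :=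
  fromBlocks (fromBlocks 0 (-diagonal γ) (diagonal ξ) (-diagonal υ))
    (fromBlocks 0 0 (-diagonal ξ) 0) (fromBlocks 0 (diagonal π) 0 0)
    (fromBlocks (diagonal π * P) (-(diagonal π * Kᵀ)) (diagonal θ * K) (diagonal θ * Z))

def lyapunovWeight [Field R] (γ π ξ : ι → R) (θ : κ → R) : (ι ⊕ ι) ⊕ (ι ⊕ κ) → R :=
  Sum.elim (Sum.elim γ⁻¹ ξ⁻¹) (Sum.elim π⁻¹ θ⁻¹)

theorem blockSystem_map {S : Type*} [CommRing R] [CommRing S] (f : R →+* S)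
    (γ π ξ υ : ι → R) (θ : κ → R) (P : Matrix ι ι R) (K : Matrix κ ι R) (Z : Matrix κ κ R) :
    (blockSystem γ π ξ υ θ P K Z).map f
      = blockSystem (f ∘ γ) (f ∘ π) (f ∘ ξ) (f ∘ υ) (f ∘ θ) (P.map f) (K.map f) (Z.map f) := by
  simp [blockSystem, fromBlocks_map, diagonal_map, Matrix.map_mul, Matrix.map_neg,
    ← transpose_map, Function.comp_def]

theorem eq_zero_of_blockSystem_mulVec_eq_smul [Field R] {γ π ξ υ : ι → R} {θ : κ → R}
    {P : Matrix ι ι R} {K : Matrix κ ι R} {Z : Matrix κ κ R} (hξ : ∀ i, ξ i ≠ 0)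
    (hθ : ∀ j, θ j ≠ 0) (hK : ∀ x, K *ᵥ x = 0 → x = 0) {μ : R} {v : (ι ⊕ ι) ⊕ (ι ⊕ κ) → R}
    (hv : blockSystem γ π ξ υ θ P K Z *ᵥ v = μ • v)
    (h₂ : v ∘ Sum.inl ∘ Sum.inr = 0) (h₄ : v ∘ Sum.inr ∘ Sum.inr = 0) : v = 0 := by
  set v₁ := v ∘ Sum.inl ∘ Sum.inl
  set v₃ := v ∘ Sum.inr ∘ Sum.inl
  have hv_eq : v = Sum.elim (Sum.elim v₁ 0) (Sum.elim v₃ 0) := by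
    ext ((i | i) | (i | i))
    · rfl
    · exact congrFun h₂ i
    · rfl
    · exact congrFun h₄ i
  rw [hv_eq] at hv ⊢
  have hKv₃ : K *ᵥ v₃ = 0 := funext fun j => by
    simpa [blockSystem, fromBlocks_mulVec, ← mulVec_mulVec, mulVec_diagonal, hθ j]
      using congrFun hv (Sum.inr (Sum.inr j))
  have hv₁₃ : v₁ = v₃ := funext fun i => by
    have row₂ := congrFun hv (Sum.inl (Sum.inr i))
    simp [blockSystem, fromBlocks_mulVec, mulVec_diagonal] at row₂
    exact sub_eq_zero.mp ((mul_eq_zero.mp (by linear_combination row₂)).resolve_left (hξ i))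
  simp [hv₁₃, hK _ hKv₃]

theorem diagonal_lyapunovWeight_mul_blockSystem [Field R] {γ π ξ : ι → R} (υ : ι → R)
    {θ : κ → R} (P : Matrix ι ι R) (K : Matrix κ ι R) (Z : Matrix κ κ R)
    (hγ : ∀ i, γ i ≠ 0) (hπ : ∀ i, π i ≠ 0) (hξ : ∀ i, ξ i ≠ 0) (hθ : ∀ j, θ j ≠ 0) :
    diagonal (lyapunovWeight γ π ξ θ) * blockSystem γ π ξ υ θ P K Z
      = fromBlocks (fromBlocks 0 (-1) 1 0) (fromBlocks 0 0 (-1) 0) (fromBlocks 0 1 0 0)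
          (fromBlocks P (-Kᵀ) K 0)
        + fromBlocks (fromBlocks 0 0 0 (-diagonal (ξ⁻¹ * υ))) 0 0 (fromBlocks 0 0 0 Z) := by
  simp [lyapunovWeight, blockSystem, ← fromBlocks_diagonal, fromBlocks_multiply, fromBlocks_add,
    ← Matrix.mul_assoc, hγ, hπ, hξ, hθ]
  rw [← diagonal_one, diagonal_neg]

theorem dotProduct_diagonal_lyapunovWeight_mul_blockSystem_mulVec {γ π ξ : ι → ℝ} (υ : ι → ℝ)
    {θ : κ → ℝ} {P : Matrix ι ι ℝ} (K : Matrix κ ι ℝ) (Z : Matrix κ κ ℝ)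
    (hγ : ∀ i, γ i ≠ 0) (hπ : ∀ i, π i ≠ 0) (hξ : ∀ i, ξ i ≠ 0) (hθ : ∀ j, θ j ≠ 0)
    (hP : Pᵀ = -P) (x : (ι ⊕ ι) ⊕ (ι ⊕ κ) → ℝ) :
    x ⬝ᵥ (diagonal (lyapunovWeight γ π ξ θ) * blockSystem γ π ξ υ θ P K Z) *ᵥ x
      = -(x ∘ Sum.inl ∘ Sum.inr ⬝ᵥ diagonal (ξ⁻¹ * υ) *ᵥ (x ∘ Sum.inl ∘ Sum.inr))
        + x ∘ Sum.inr ∘ Sum.inr ⬝ᵥ Z *ᵥ (x ∘ Sum.inr ∘ Sum.inr) := by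
  rw [diagonal_lyapunovWeight_mul_blockSystem υ P K Z hγ hπ hξ hθ, add_mulVec, dotProduct_add,
    dotProduct_mulVec_self_eq_zero_of_transpose_eq_neg
      (by simp [fromBlocks_transpose, fromBlocks_neg, hP]),
    zero_add, ← Sum.elim_comp_inl_inr x, ← Sum.elim_comp_inl_inr (x ∘ Sum.inl),
    ← Sum.elim_comp_inl_inr (x ∘ Sum.inr)]
  simp [fromBlocks_mulVec, sumElim_dotProduct_sumElim, Function.comp_def, neg_mulVec,
    -diagonal_neg]

theorem isHurwitz_blockSystem {γ π ξ υ : ι → ℝ} {θ : κ → ℝ} {P : Matrix ι ι ℝ}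
    {K : Matrix κ ι ℝ} {Z : Matrix κ κ ℝ} (hγ : ∀ i, 0 < γ i) (hπ : ∀ i, 0 < π i)
    (hξ : ∀ i, 0 < ξ i) (hυ : ∀ i, 0 < υ i) (hθ : ∀ j, 0 < θ j)
    (hK : ∀ x, K *ᵥ x = 0 → x = 0) (hP : Pᵀ = -P) (hZ : (-(Z + Zᵀ)).PosDef) :
    IsHurwitz (blockSystem γ π ξ υ θ P K Z) := by
  have hW : (diagonal (lyapunovWeight γ π ξ θ)).PosDef := by
    refine posDef_diagonal_iff.mpr fun i => ?_
    rcases i with (i | i) | (i | i) <;> simp [lyapunovWeight, hγ, hπ, hξ, hθ]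
  have hD : (diagonal (ξ⁻¹ * υ)).PosDef :=
    posDef_diagonal_iff.mpr fun i => mul_pos (inv_pos.mpr (hξ i)) (hυ i)
  have hdiss_eq := dotProduct_diagonal_lyapunovWeight_mul_blockSystem_mulVec υ K Z
    (fun i => (hγ i).ne') (fun i => (hπ i).ne') (fun i => (hξ i).ne') (fun j => (hθ j).ne') hP
  have hD_nonneg (y : ι → ℝ) : 0 ≤ y ⬝ᵥ diagonal (ξ⁻¹ * υ) *ᵥ y := by
    simpa using hD.posSemidef.dotProduct_mulVec_nonneg y
  have hdiss_eq_zero (x : (ι ⊕ ι) ⊕ (ι ⊕ κ) → ℝ)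
      (hx : x ⬝ᵥ (diagonal (lyapunovWeight γ π ξ θ) * blockSystem γ π ξ υ θ P K Z) *ᵥ x = 0) :
      x ∘ Sum.inl ∘ Sum.inr = 0 ∧ x ∘ Sum.inr ∘ Sum.inr = 0 := by
    rw [hdiss_eq] at hx
    have hx₂ := hD_nonneg (x ∘ Sum.inl ∘ Sum.inr)
    have hx₄ := dotProduct_mulVec_self_nonpos hZ (x ∘ Sum.inr ∘ Sum.inr)
    constructor <;> by_contra hne
    · linarith [by simpa using hD.dotProduct_mulVec_pos hne]
    · linarith [dotProduct_mulVec_self_neg hZ hne]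
  refine isHurwitz_of_lyapunov hW (fun x => ?_) fun μ v hv hre him => ?_
  · rw [hdiss_eq]
    linarith [hD_nonneg (x ∘ Sum.inl ∘ Sum.inr),
      dotProduct_mulVec_self_nonpos hZ (x ∘ Sum.inr ∘ Sum.inr)]
  obtain ⟨hre₂, hre₄⟩ := hdiss_eq_zero _ hre
  obtain ⟨him₂, him₄⟩ := hdiss_eq_zero _ him
  rw [show (blockSystem γ π ξ υ θ P K Z).map ofReal = _ from blockSystem_map ofRealHom ..] at hv
  exact eq_zero_of_blockSystem_mulVec_eq_smul (fun i => ofReal_ne_zero.mpr (hξ i).ne')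
    (fun j => ofReal_ne_zero.mpr (hθ j).ne') (fun _ => eq_zero_of_mulVec_map_ofReal_eq_zero hK) hv
    (re_comp_eq_zero_and_im_comp_eq_zero_iff.mp ⟨hre₂, him₂⟩)
    (re_comp_eq_zero_and_im_comp_eq_zero_iff.mp ⟨hre₄, him₄⟩)

end BlockSystem

/-- The block matrix `B = [[0, −Γ, 0, 0], [Ξ, −Υ, −Ξ, 0], [0, Π, ΠP, −ΠKᵀ],
[0, 0, ΘK, ΘZ]]` is Hurwitz when `Γ, Π, Ξ, Υ, Θ` are diagonal with positive
diagonal entries, `K` has trivial kernel, `P` is skew-symmetric, and `Z + Zᵀ`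
is negative definite. -/
theorem big_block_hurwitz {n m : ℕ}
    (Γ Pi' Ξ Υ P : Matrix (Fin n) (Fin n) ℝ)
    (Θ Z : Matrix (Fin m) (Fin m) ℝ) (K : Matrix (Fin m) (Fin n) ℝ)
    (hΓd : Γ.IsDiag) (hPid : Pi'.IsDiag) (hΞd : Ξ.IsDiag) (hΥd : Υ.IsDiag)
    (hΘd : Θ.IsDiag)
    (hΓ : ∀ i, 0 < Γ i i) (hPi : ∀ i, 0 < Pi' i i)
    (hΞ : ∀ i, 0 < Ξ i i) (hΥ : ∀ i, 0 < Υ i i) (hΘ : ∀ i, 0 < Θ i i)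
    (hK : ∀ x : Fin n → ℝ, K.mulVec x = 0 → x = 0)
    (hP : Pᵀ = -P)
    (hZ : (-(Z + Zᵀ)).PosDef) :
    IsHurwitz (Matrix.fromBlocks
      (Matrix.fromBlocks 0 (-Γ) Ξ (-Υ))
      (Matrix.fromBlocks 0 0 (-Ξ) 0)
      (Matrix.fromBlocks 0 Pi' 0 0)
      (Matrix.fromBlocks (Pi' * P) (-(Pi' * Kᵀ)) (Θ * K) (Θ * Z))) := by
  obtain ⟨γ, rfl⟩ : ∃ γ, Γ = diagonal γ := ⟨_, hΓd.diagonal_diag.symm⟩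
  obtain ⟨π, rfl⟩ : ∃ π, Pi' = diagonal π := ⟨_, hPid.diagonal_diag.symm⟩
  obtain ⟨ξ, rfl⟩ : ∃ ξ, Ξ = diagonal ξ := ⟨_, hΞd.diagonal_diag.symm⟩
  obtain ⟨υ, rfl⟩ : ∃ υ, Υ = diagonal υ := ⟨_, hΥd.diagonal_diag.symm⟩
  obtain ⟨θ, rfl⟩ : ∃ θ, Θ = diagonal θ := ⟨_, hΘd.diagonal_diag.symm⟩
  simp only [diagonal_apply_eq] at hΓ hPi hΞ hΥ hΘ
  exact isHurwitz_blockSystem hΓ hPi hΞ hΥ hΘ hK hP hZ
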